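/- Let m_opt ∈ {1, …, N} satisfy B(m_opt) ≤ B(m) for all m ∈ {1, …, N}. If B(m_opt) < N, then ⌊√N⌋ ≤ m_opt ≤ ⌈√(r·N)⌉ and m_opt ≤ ⌈(N+1)/2⌉. -/

import Mathlib

open Matrix

/-- `ω(x) = (√x + 1/√x)²/4`, from the Kantorovich inequality. -/
noncomputable def omegaFn (x : ℝ) : ℝ := (Real.sqrt x + 1 / Real.sqrt x) ^ 2 / 4

/-- The `j`-th eigenvalue `λⱼ` of the Laplacian, 1-indexed (with `λⱼ = 0` for `j ≤ 0` since
`λ₁ = 0`, and `0` beyond `N`). -/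
noncomputable def eig1 {N : ℕ} (lam : Fin N → ℝ) (j : ℕ) : ℝ :=
  if h : j - 1 < N then lam ⟨j - 1, h⟩ else 0

/-- `B(m) = r·(N/m) + ∑_{i=2}^{m} ω(max(1, λ_{N+2−i}/λᵢ))` where `r = ω(λ_N/λ₂)`. -/
noncomputable def Bfull {N : ℕ} (lam : Fin N → ℝ) (m : ℕ) : ℝ :=
  omegaFn (eig1 lam N / eig1 lam 2) * ((N : ℝ) / (m : ℝ)) +
    ∑ i ∈ Finset.Icc 2 m, omegaFn (max 1 (eig1 lam (N + 2 - i) / eig1 lam i))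

lemma omega_one_le {x : ℝ} (hx : 0 < x) : 1 ≤ omegaFn x := by
  have hs : 0 < Real.sqrt x := Real.sqrt_pos.mpr hx
  have h1 : Real.sqrt x * (1 / Real.sqrt x) = 1 := by field_simp
  unfold omegaFn
  nlinarith [sq_nonneg (Real.sqrt x - 1 / Real.sqrt x)]

lemma omega_mono {a b : ℝ} (ha : 1 ≤ a) (hab : a ≤ b) : omegaFn a ≤ omegaFn b := by
  have hb : 1 ≤ b := ha.trans hab
  have hsa : 1 ≤ Real.sqrt a := by
    rw [show (1:ℝ) = Real.sqrt 1 by simp]; exact Real.sqrt_le_sqrt ha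
  have hsb : 1 ≤ Real.sqrt b := by
    rw [show (1:ℝ) = Real.sqrt 1 by simp]; exact Real.sqrt_le_sqrt hb
  have hsab : Real.sqrt a ≤ Real.sqrt b := Real.sqrt_le_sqrt hab
  have hpa : 0 < Real.sqrt a := lt_of_lt_of_le one_pos hsa
  have hpb : 0 < Real.sqrt b := lt_of_lt_of_le one_pos hsb
  have key : Real.sqrt a + 1 / Real.sqrt a ≤ Real.sqrt b + 1 / Real.sqrt b := by
    have h1a : Real.sqrt a * (1 / Real.sqrt a) = 1 := by field_simp
    have h1b : Real.sqrt b * (1 / Real.sqrt b) = 1 := by field_simp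
    nlinarith [mul_le_mul hsa hsab (by linarith) (by linarith),
      mul_pos hpa hpb]
  unfold omegaFn
  have h0 : 0 ≤ Real.sqrt a + 1 / Real.sqrt a := by positivity
  have := pow_le_pow_left₀ h0 key 2
  linarith

set_option maxHeartbeats 1600000 in
/-- Paper's Remark 6 (`mopt`): if `m_opt` minimises `B` over `{1, …, N}` and
`B(m_opt) < N`, then `⌊√N⌋ ≤ m_opt ≤ ⌈√(r·N)⌉` and `m_opt ≤ ⌈(N+1)/2⌉`. -/
theorem stmt_18 (N : ℕ) (hN : 2 ≤ N)
    (G : SimpleGraph (Fin N)) [DecidableRel G.Adj] (hG : G.Connected)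
    (lam : Fin N → ℝ) (hmono : StrictMono lam) (hlam0 : lam ⟨0, by omega⟩ = 0)
    (u : Fin N → Fin N → ℝ)
    (hortho : ∀ i j, u i ⬝ᵥ u j = if i = j then (1 : ℝ) else 0)
    (heig : ∀ i, (G.lapMatrix ℝ).mulVec (u i) = lam i • u i)
    (mopt : ℕ) (hmopt : mopt ∈ Finset.Icc 1 N)
    (hmin : ∀ m ∈ Finset.Icc 1 N, Bfull lam mopt ≤ Bfull lam m)
    (hB : Bfull lam mopt < (N : ℝ)) :
    ⌊Real.sqrt (N : ℝ)⌋₊ ≤ mopt ∧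
    mopt ≤ ⌈Real.sqrt (omegaFn (eig1 lam N / eig1 lam 2) * (N : ℝ))⌉₊ ∧
    mopt ≤ ⌈((N : ℝ) + 1) / 2⌉₊ := by
  obtain ⟨hm1, hmN⟩ := Finset.mem_Icc.mp hmopt
  have e2 : eig1 lam 2 = lam ⟨1, by omega⟩ := by
    simp only [eig1]; rw [dif_pos (show 2 - 1 < N by omega)]
  have eN : eig1 lam N = lam ⟨N - 1, by omega⟩ := by
    simp only [eig1]; rw [dif_pos (show N - 1 < N by omega)]
  have hlam2 : 0 < eig1 lam 2 := by
    rw [e2, ← hlam0]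
    exact hmono (Fin.mk_lt_mk.mpr one_pos)
  have h2N : eig1 lam 2 ≤ eig1 lam N := by
    rw [e2, eN]
    exact hmono.monotone (Fin.mk_le_mk.mpr (by omega))
  set r := omegaFn (eig1 lam N / eig1 lam 2) with hrdef
  have hx1 : 1 ≤ eig1 lam N / eig1 lam 2 := (one_le_div hlam2).mpr h2N
  have hr1 : 1 ≤ r := omega_one_le (lt_of_lt_of_le one_pos hx1)
  have hterm1 : ∀ i : ℕ,
      1 ≤ omegaFn (max 1 (eig1 lam (N + 2 - i) / eig1 lam i)) := fun i =>
    omega_one_le (lt_of_lt_of_le one_pos (le_max_left _ _))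
  have hterm : ∀ i : ℕ, 2 ≤ i → i ≤ N →
      omegaFn (max 1 (eig1 lam (N + 2 - i) / eig1 lam i)) ≤ r := by
    intro i h2 hiN
    apply omega_mono (le_max_left _ _)
    apply max_le hx1
    have hnum : eig1 lam (N + 2 - i) ≤ eig1 lam N := by
      have hlt : N + 2 - i - 1 < N := by omega
      rw [eN]; simp only [eig1]; rw [dif_pos hlt]
      exact hmono.monotone (Fin.mk_le_mk.mpr (by omega))
    have hden : eig1 lam 2 ≤ eig1 lam i := by
      have hlt : i - 1 < N := by omega
      rw [e2]; simp only [eig1]; rw [dif_pos hlt]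
      exact hmono.monotone (Fin.mk_le_mk.mpr (by omega))
    exact div_le_div₀ (hlam2.le.trans h2N) hnum hlam2 hden
  have hBdef : ∀ m : ℕ, Bfull lam m = r * ((N : ℝ) / (m : ℝ)) +
      ∑ i ∈ Finset.Icc 2 m, omegaFn (max 1 (eig1 lam (N + 2 - i) / eig1 lam i)) :=
    fun m => rfl
  have hsum_ge : ∀ m : ℕ, (m : ℝ) - 1 ≤
      ∑ i ∈ Finset.Icc 2 m, omegaFn (max 1 (eig1 lam (N + 2 - i) / eig1 lam i)) := by
    intro m
    have hcard : ((Finset.Icc 2 m).card : ℝ) ≤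
        ∑ i ∈ Finset.Icc 2 m, omegaFn (max 1 (eig1 lam (N + 2 - i) / eig1 lam i)) := by
      simpa using Finset.card_nsmul_le_sum (Finset.Icc 2 m) _ 1 (fun i _ => hterm1 i)
    have hc : (m : ℝ) - 1 ≤ ((Finset.Icc 2 m).card : ℝ) := by
      rw [Nat.card_Icc]
      rcases le_or_gt 1 m with h | h
      · rw [show m + 1 - 2 = m - 1 by omega, Nat.cast_sub h]; simp
      · interval_cases m <;> norm_num
    linarith
  have hsplit : ∀ k : ℕ, 2 ≤ k →
      (∑ i ∈ Finset.Icc 2 k, omegaFn (max 1 (eig1 lam (N + 2 - i) / eig1 lam i))) =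
      (∑ i ∈ Finset.Icc 2 (k - 1), omegaFn (max 1 (eig1 lam (N + 2 - i) / eig1 lam i))) +
        omegaFn (max 1 (eig1 lam (N + 2 - k) / eig1 lam k)) := by
    intro k hk
    obtain ⟨j, rfl⟩ : ∃ j, k = j + 1 := ⟨k - 1, by omega⟩
    rw [Finset.sum_Icc_succ_top (show 2 ≤ j + 1 by omega), Nat.add_sub_cancel]
  have haN : 0 < (mopt : ℝ) := by exact_mod_cast hm1
  -- Fact U : if mopt ≥ 2 then mopt (mopt - 1) ≤ r N
  have factU : 2 ≤ mopt → (mopt : ℝ) * ((mopt : ℝ) - 1) ≤ r * N := by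
    intro h2
    have h := hmin (mopt - 1) (Finset.mem_Icc.mpr ⟨by omega, by omega⟩)
    rw [hBdef, hBdef, hsplit mopt h2] at h
    have hω := hterm1 mopt
    have ha2 : (2 : ℝ) ≤ (mopt : ℝ) := by exact_mod_cast h2
    have hc : ((mopt - 1 : ℕ) : ℝ) = (mopt : ℝ) - 1 := by
      rw [Nat.cast_sub (by omega)]; norm_num
    rw [hc] at h
    have ha1 : (0 : ℝ) < (mopt : ℝ) - 1 := by linarith
    have h1 : r * ((N : ℝ) / (mopt : ℝ)) * (mopt : ℝ) = r * N := by
      field_simp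
    have h2' : r * ((N : ℝ) / ((mopt : ℝ) - 1)) * ((mopt : ℝ) - 1) = r * N := by
      rw [mul_assoc, div_mul_cancel₀ _ (ne_of_gt ha1)]
    have hp : (r * ((N : ℝ) / (mopt : ℝ)) + 1) * ((mopt : ℝ) - 1) ≤
        r * ((N : ℝ) / ((mopt : ℝ) - 1)) * ((mopt : ℝ) - 1) :=
      mul_le_mul_of_nonneg_right (by linarith) (by linarith)
    nlinarith [hp, h1, h2', mul_pos haN ha1]
  -- Fact L : if mopt + 1 ≤ N then N ≤ mopt (mopt + 1)
  have factL : mopt + 1 ≤ N → (N : ℝ) ≤ (mopt : ℝ) * ((mopt : ℝ) + 1) := by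
    intro hlt
    have h := hmin (mopt + 1) (Finset.mem_Icc.mpr ⟨by omega, hlt⟩)
    rw [hBdef, hBdef, hsplit (mopt + 1) (by omega), Nat.add_sub_cancel] at h
    have hω := hterm (mopt + 1) (by omega) hlt
    have hcast : ((mopt + 1 : ℕ) : ℝ) = (mopt : ℝ) + 1 := by push_cast; ring
    rw [hcast] at h
    have h1 : r * ((N : ℝ) / (mopt : ℝ)) * (mopt : ℝ) = r * N := by field_simp
    have h2' : r * ((N : ℝ) / ((mopt : ℝ) + 1)) * ((mopt : ℝ) + 1) = r * N := by
      rw [mul_assoc, div_mul_cancel₀ _ (by positivity)]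
    have hp : r * ((N : ℝ) / (mopt : ℝ)) * (mopt : ℝ) ≤
        (r * ((N : ℝ) / ((mopt : ℝ) + 1)) + r) * (mopt : ℝ) :=
      mul_le_mul_of_nonneg_right (by linarith) haN.le
    have hv : r * ((N : ℝ) / ((mopt : ℝ) + 1)) ≤ r * (mopt : ℝ) := by
      nlinarith [hp, h1, h2']
    have hfin : r * (N : ℝ) ≤ r * ((mopt : ℝ) * ((mopt : ℝ) + 1)) := by
      nlinarith [mul_le_mul_of_nonneg_right hv (show (0:ℝ) ≤ (mopt : ℝ) + 1 by linarith),
        h2']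
    exact (mul_le_mul_iff_right₀ (by linarith : (0:ℝ) < r)).mp hfin
  refine ⟨?_, ?_, ?_⟩
  · -- lower bound ⌊√N⌋ ≤ mopt
    by_contra hcon
    push_neg at hcon
    have hsN : 1 ≤ Real.sqrt N := by
      rw [show (1:ℝ) = Real.sqrt 1 by simp]
      exact Real.sqrt_le_sqrt (by exact_mod_cast hN.trans' (by norm_num))
    have hsq : Real.sqrt N * Real.sqrt N = N := Real.mul_self_sqrt (by positivity)
    have hf1 : 1 ≤ ⌊Real.sqrt N⌋₊ := Nat.le_floor (by exact_mod_cast hsN)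
    have hfleN : ⌊Real.sqrt N⌋₊ ≤ N := by
      have hs : Real.sqrt N ≤ N := by nlinarith
      calc ⌊Real.sqrt N⌋₊ ≤ ⌊(N:ℝ)⌋₊ := Nat.floor_mono hs
        _ = N := Nat.floor_natCast N
    have hL := factL (by omega)
    have hfloor : (⌊Real.sqrt N⌋₊ : ℝ) ≤ Real.sqrt N := Nat.floor_le (Real.sqrt_nonneg _)
    have hmf : (mopt : ℝ) ≤ (⌊Real.sqrt N⌋₊ : ℝ) - 1 := by
      have : mopt + 1 ≤ ⌊Real.sqrt N⌋₊ := by omega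
      have := (Nat.cast_le (α := ℝ)).mpr this
      push_cast at this; linarith
    have hf1' : (1 : ℝ) ≤ (⌊Real.sqrt N⌋₊ : ℝ) := by exact_mod_cast hf1
    have hprod : (mopt : ℝ) * ((mopt : ℝ) + 1) ≤
        ((⌊Real.sqrt N⌋₊ : ℝ) - 1) * (⌊Real.sqrt N⌋₊ : ℝ) :=
      mul_le_mul hmf (by linarith) (by positivity) (by linarith)
    have hff : (⌊Real.sqrt N⌋₊ : ℝ) * (⌊Real.sqrt N⌋₊ : ℝ) ≤ (N : ℝ) := by
      have h := mul_le_mul hfloor hfloor (by linarith) (Real.sqrt_nonneg _)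
      rw [hsq] at h; exact h
    linarith
  · -- upper bound mopt ≤ ⌈√(rN)⌉
    rcases Nat.lt_or_ge mopt 2 with hlt | h2
    · have : 0 < ⌈Real.sqrt (r * N)⌉₊ := by
        rw [Nat.ceil_pos]
        apply Real.sqrt_pos.mpr
        exact mul_pos (lt_of_lt_of_le one_pos hr1) (by positivity)
      omega
    · by_contra hcon
      push_neg at hcon
      have hU := factU h2
      have hcceil : Real.sqrt (r * N) ≤ (⌈Real.sqrt (r * N)⌉₊ : ℝ) := Nat.le_ceil _
      have hrN : (0:ℝ) < r * N :=
        mul_pos (lt_of_lt_of_le one_pos hr1) (by positivity)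
      have hsq : Real.sqrt (r * N) * Real.sqrt (r * N) = r * N :=
        Real.mul_self_sqrt hrN.le
      have hc1 : 1 ≤ ⌈Real.sqrt (r * N)⌉₊ := Nat.ceil_pos.mpr (Real.sqrt_pos.mpr hrN)
      have hca : (⌈Real.sqrt (r * N)⌉₊ : ℝ) + 1 ≤ (mopt : ℝ) := by
        have : ⌈Real.sqrt (r * N)⌉₊ + 1 ≤ mopt := by omega
        exact_mod_cast this
      have hc1' : (1:ℝ) ≤ (⌈Real.sqrt (r * N)⌉₊ : ℝ) := by exact_mod_cast hc1
      have hcc : r * N ≤ (⌈Real.sqrt (r * N)⌉₊ : ℝ) * (⌈Real.sqrt (r * N)⌉₊ : ℝ) := by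
        have h := mul_le_mul hcceil hcceil (Real.sqrt_nonneg _) (by linarith)
        rw [hsq] at h; exact h
      have hprod : ((⌈Real.sqrt (r * N)⌉₊ : ℝ) + 1) * (⌈Real.sqrt (r * N)⌉₊ : ℝ) ≤
          (mopt : ℝ) * ((mopt : ℝ) - 1) :=
        mul_le_mul hca (by linarith) (by linarith) (by linarith)
      linarith
  · -- upper bound mopt ≤ ⌈(N+1)/2⌉
    rcases Nat.lt_or_ge mopt 2 with hlt | h2
    · have : 0 < ⌈((N : ℝ) + 1) / 2⌉₊ := by
        rw [Nat.ceil_pos]; positivity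
      omega
    · have hU := factU h2
      have ha2 : (2:ℝ) ≤ (mopt : ℝ) := by exact_mod_cast h2
      have hge : (mopt : ℝ) - 1 ≤ r * ((N : ℝ) / (mopt : ℝ)) := by
        rw [mul_div_assoc', le_div_iff₀ haN]
        nlinarith
      have hBlow : r * ((N : ℝ) / (mopt : ℝ)) + ((mopt : ℝ) - 1) ≤ Bfull lam mopt := by
        rw [hBdef]
        have := hsum_ge mopt
        linarith
      have h2m : 2 * (mopt : ℝ) < (N : ℝ) + 2 := by linarith
      have h2m' : 2 * mopt < N + 2 := by exact_mod_cast h2m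
      have hmle : (mopt : ℝ) ≤ ((N : ℝ) + 1) / 2 := by
        have : 2 * mopt ≤ N + 1 := by omega
        have := (Nat.cast_le (α := ℝ)).mpr this
        push_cast at this; linarith
      exact_mod_cast le_trans hmle (Nat.le_ceil _)
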